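/- Assume there is an open interval I ⊆ ℝ containing 0 such that for every α ∈ I, ∫ p q^α (1 + |log p| + |log q|)² dμ < ∞ (in particular Z_α ∈ (0,∞) for α ∈ I). Then the function α ↦ H(p_α) is differentiable at α = 0 and its derivative there equals −Cov_{p}[log p, log q]. -/

import Mathlib

open MeasureTheory Real Filter Topology Set

/-!
Near `α = 0` we have `log p_α = log p + α log q - log Z_α` wherever `p > 0`, so
`H(p_α) = log Z_α - (A_α + α B_α) / Z_α` with `A_α = ∫ p q^α log p` and `B_α = ∫ p q^α log q`.
Choosing `a < 0 < b` in `I`, the bound `q^α ≤ q^a + q^b` for `α ∈ [a, b]` lets the integrable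
weights `p q^a (1 + |log p| + |log q|)²` and `p q^b (1 + |log p| + |log q|)²` dominate
`α ↦ p q^α g` and its `α`-derivative `p q^α g log q` for `g ∈ {1, log p, log q}`. Hence `Z`, `A`,
`B` are differentiable at `0`, and since `Z_0 = 1` the quotient rule yields
`Z'_0 - A'_0 - B_0 + A_0 Z'_0 = -(E_p[log p log q] - E_p[log p] E_p[log q])`.
-/

lemma Real.rpow_le_rpow_add_rpow {t a b α : ℝ} (ht : 0 < t) (hα : α ∈ Icc a b) :
    t ^ α ≤ t ^ a + t ^ b := by
  rcases le_total t 1 with h | h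
  · exact le_add_of_le_of_nonneg (rpow_le_rpow_of_exponent_ge ht h hα.1) (rpow_nonneg ht.le b)
  · exact le_add_of_nonneg_of_le (rpow_nonneg ht.le a) (rpow_le_rpow_of_exponent_le h hα.2)

section

variable {X : Type*} [MeasurableSpace X] {μ : Measure X}

lemma MeasureTheory.Integrable.mul_of_abs_le {w g B : X → ℝ}
    (hB : Integrable (fun x => w x * B x) μ)
    (hw : ∀ x, 0 ≤ w x) (hwg : AEStronglyMeasurable (fun x => w x * g x) μ)
    (hg : ∀ x, |g x| ≤ B x) : Integrable (fun x => w x * g x) μ :=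
  hB.mono' hwg <| Eventually.of_forall fun x => by
    rw [norm_mul, norm_of_nonneg (hw x)]
    exact mul_le_mul_of_nonneg_left (hg x) (hw x)

theorem hasDerivAt_integral_mul_rpow_mul {w q g B : X → ℝ} {a b α₀ : ℝ}
    (hab : Icc a b ∈ 𝓝 α₀) (hw : Measurable w) (hw0 : ∀ x, 0 ≤ w x) (hq : Measurable q)
    (hpos : ∀ᵐ x ∂μ, w x ≠ 0 → 0 < q x) (hg : Measurable g)
    (hBa : Integrable (fun x => w x * q x ^ a * B x) μ)
    (hBb : Integrable (fun x => w x * q x ^ b * B x) μ)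
    (hgB : ∀ x, |g x| ≤ B x) (hg_logB : ∀ x, |g x * log (q x)| ≤ B x) :
    HasDerivAt (fun α => ∫ x, w x * q x ^ α * g x ∂μ)
      (∫ x, w x * q x ^ α₀ * (g x * log (q x)) ∂μ) α₀ := by
  have hbound : Integrable (fun x => w x * (q x ^ a + q x ^ b) * B x) μ :=
    (hBa.add hBb).congr (Eventually.of_forall fun x => by simp only [Pi.add_apply]; ring)
  have hdom : ∀ᵐ x ∂μ, ∀ α ∈ Icc a b, ∀ c : ℝ, |c| ≤ B x →
      ‖w x * q x ^ α * c‖ ≤ w x * (q x ^ a + q x ^ b) * B x := by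
    filter_upwards [hpos] with x hx α hα c hc
    rcases (hw0 x).eq_or_lt with h0 | h0
    · simp [← h0]
    have hqx := hx h0.ne'
    rw [norm_mul, norm_mul, norm_of_nonneg (hw0 x), norm_of_nonneg (rpow_nonneg hqx.le α)]
    gcongr
    exacts [rpow_le_rpow_add_rpow hqx hα, hc]
  have hmeas : ∀ α : ℝ, AEStronglyMeasurable (fun x => w x * q x ^ α * g x) μ := fun α =>
    ((hw.mul (hq.pow_const α)).mul hg).aestronglyMeasurable
  have hderiv : ∀ᵐ x ∂μ, ∀ α ∈ Icc a b, HasDerivAt (fun α => w x * q x ^ α * g x)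
      (w x * q x ^ α * (g x * log (q x))) α := by
    filter_upwards [hpos] with x hx α _
    rcases (hw0 x).eq_or_lt with h0 | h0
    · simpa [← h0] using hasDerivAt_const α (0 : ℝ)
    refine (((hasStrictDerivAt_const_rpow (hx h0.ne') α).hasDerivAt.const_mul (w x)).mul_const
      (g x)).congr_deriv ?_
    ring
  refine (hasDerivAt_integral_of_dominated_loc_of_deriv_le hab (Eventually.of_forall hmeas)
    (hbound.mono' (hmeas α₀) (hdom.mono fun x hx => hx α₀ (mem_of_mem_nhds hab) _ (hgB x)))
    ?_ ?_ hbound hderiv).2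
  · exact ((hw.mul (hq.pow_const α₀)).mul (hg.mul hq.log)).aestronglyMeasurable
  · exact hdom.mono fun x hx α hα => hx α hα _ (hg_logB x)

lemma abs_le_sq_of_abs_le {u c : ℝ} (hc : 1 ≤ c) (hu : |u| ≤ c) : |u| ≤ c ^ 2 :=
  hu.trans (by nlinarith)

lemma abs_mul_le_sq_of_abs_le {u v c : ℝ} (hu : |u| ≤ c) (hv : |v| ≤ c) : |u * v| ≤ c ^ 2 := by
  rw [abs_mul, sq]
  exact mul_le_mul hu hv (abs_nonneg v) ((abs_nonneg u).trans hu)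

variable {p q : X → ℝ}

theorem hasDerivAt_integral_tilt_mul {g : X → ℝ} {a b α₀ : ℝ} (hab : Icc a b ∈ 𝓝 α₀)
    (hpmeas : Measurable p) (hp0 : ∀ x, 0 ≤ p x) (hqmeas : Measurable q)
    (hpos : ∀ᵐ x ∂μ, p x ≠ 0 → 0 < q x)
    (ha : Integrable (fun x => p x * q x ^ a * (1 + |log (p x)| + |log (q x)|) ^ 2) μ)
    (hb : Integrable (fun x => p x * q x ^ b * (1 + |log (p x)| + |log (q x)|) ^ 2) μ)
    (hg : Measurable g) (hg_le : ∀ x, |g x| ≤ 1 + |log (p x)| + |log (q x)|) :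
    HasDerivAt (fun α => ∫ x, p x * q x ^ α * g x ∂μ)
      (∫ x, p x * q x ^ α₀ * (g x * log (q x)) ∂μ) α₀ := by
  have one_le (x : X) : 1 ≤ 1 + |log (p x)| + |log (q x)| := by
    linarith [abs_nonneg (log (p x)), abs_nonneg (log (q x))]
  have log_q_le (x : X) : |log (q x)| ≤ 1 + |log (p x)| + |log (q x)| := by
    linarith [abs_nonneg (log (p x))]
  exact hasDerivAt_integral_mul_rpow_mul hab hpmeas hp0 hqmeas hpos hg ha hb
    (fun x => abs_le_sq_of_abs_le (one_le x) (hg_le x))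
    (fun x => abs_mul_le_sq_of_abs_le (hg_le x) (log_q_le x))

theorem integral_tilt_mul_log_tilt {α Z : ℝ} (hpmeas : Measurable p) (hp0 : ∀ x, 0 ≤ p x)
    (hqmeas : Measurable q) (hq0 : ∀ x, 0 ≤ q x) (hpos : ∀ᵐ x ∂μ, p x ≠ 0 → 0 < q x)
    (hint : Integrable (fun x => p x * q x ^ α * (1 + |log (p x)| + |log (q x)|) ^ 2) μ)
    (hZ : ∫ x, p x * q x ^ α ∂μ = Z) (hZpos : 0 < Z) :
    ∫ x, p x * q x ^ α / Z * log (p x * q x ^ α / Z) ∂μ =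
      (∫ x, p x * q x ^ α * log (p x) ∂μ + α * ∫ x, p x * q x ^ α * log (q x) ∂μ) / Z
        - log Z := by
  have hw0 (x : X) : 0 ≤ p x * q x ^ α := mul_nonneg (hp0 x) (rpow_nonneg (hq0 x) α)
  have hint_mul {g : X → ℝ} (hg : Measurable g)
      (hg_le : ∀ x, |g x| ≤ 1 + |log (p x)| + |log (q x)|) :
      Integrable (fun x => p x * q x ^ α * g x) μ :=
    hint.mul_of_abs_le hw0 ((hpmeas.mul (hqmeas.pow_const α)).mul hg).aestronglyMeasurable
      fun x => abs_le_sq_of_abs_le (by linarith [abs_nonneg (log (p x)), abs_nonneg (log (q x))])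
        (hg_le x)
  have i0 : Integrable (fun x => p x * q x ^ α) μ := by
    simpa using hint_mul (g := fun _ => (1 : ℝ)) measurable_const fun x => by
      rw [abs_one]; linarith [abs_nonneg (log (p x)), abs_nonneg (log (q x))]
  have i1 := hint_mul hpmeas.log fun x => by linarith [abs_nonneg (log (q x))]
  have i2 := hint_mul hqmeas.log fun x => by linarith [abs_nonneg (log (p x))]
  have hpt : (fun x => p x * q x ^ α / Z * log (p x * q x ^ α / Z)) =ᵐ[μ] fun x =>
      (p x * q x ^ α * log (p x) + α * (p x * q x ^ α * log (q x))) / Z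
        - log Z / Z * (p x * q x ^ α) := by
    filter_upwards [hpos] with x hx
    rcases (hp0 x).eq_or_lt with h0 | h0
    · simp [← h0]
    have hqx := hx h0.ne'
    rw [log_div (by positivity) hZpos.ne', log_mul h0.ne' (rpow_pos_of_pos hqx α).ne',
      log_rpow hqx]
    ring
  have i12 : Integrable
      (fun x => p x * q x ^ α * log (p x) + α * (p x * q x ^ α * log (q x))) μ :=
    i1.add (i2.const_mul α)
  rw [integral_congr_ae hpt, integral_sub (i12.div_const Z) (i0.const_mul _), integral_div,
    integral_add i1 (i2.const_mul α), integral_const_mul, integral_const_mul, hZ]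
  field_simp

end

theorem hasDerivAt_log_sub_add_mul_div {Z A B : ℝ → ℝ} {Z' A' B' : ℝ} (hZ : HasDerivAt Z Z' 0)
    (hA : HasDerivAt A A' 0) (hB : HasDerivAt B B' 0) (hZ0 : Z 0 = 1) :
    HasDerivAt (fun α => log (Z α) - (A α + α * B α) / Z α) (Z' - A' - B 0 + A 0 * Z') 0 := by
  have hZ0' : Z 0 ≠ 0 := hZ0 ▸ one_ne_zero
  refine ((hZ.log hZ0').sub ((hA.add ((hasDerivAt_id 0).mul hB)).div hZ hZ0')).congr_deriv ?_
  simp only [hZ0, Pi.add_apply, Pi.mul_apply]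
  ring

theorem skewed_entropy_deriv_at_zero_general
    {X : Type*} [MeasurableSpace X] (μ : Measure X)
    (p q : X → ℝ)
    (hpmeas : Measurable p) (hp0 : ∀ x, 0 ≤ p x) (hp1 : ∫ x, p x ∂μ = 1)
    (hqmeas : Measurable q) (hq0 : ∀ x, 0 ≤ q x)
    (habs : ∀ᵐ x ∂μ, q x = 0 → p x = 0)
    (Z : ℝ → ℝ) (hZ : Z = fun α => ∫ x, p x * q x ^ α ∂μ)
    (pα : ℝ → X → ℝ) (hpα : pα = fun α x => p x * q x ^ α / Z α)
    (I : Set ℝ) (hIopen : IsOpen I) (hI0 : (0 : ℝ) ∈ I)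
    (hint : ∀ α ∈ I, Integrable
      (fun x => p x * q x ^ α * (1 + |Real.log (p x)| + |Real.log (q x)|) ^ 2) μ)
    (H : (X → ℝ) → ℝ)
    (hH : H = fun r => -∫ x, r x * Real.log (r x) ∂μ) :
    HasDerivAt (fun α => H (pα α))
      (-((∫ x, p x * (Real.log (p x) * Real.log (q x)) ∂μ) -
        (∫ x, p x * Real.log (p x) ∂μ) * (∫ x, p x * Real.log (q x) ∂μ))) 0 := by
  subst hpα hH
  have hpos : ∀ᵐ x ∂μ, p x ≠ 0 → 0 < q x :=
    habs.mono fun x hx hp => (hq0 x).lt_of_ne' fun hq => hp (hx hq)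
  obtain ⟨a, b, h0, hab, habI⟩ := exists_Icc_mem_subset_of_mem_nhds (hIopen.mem_nhds hI0)
  have hderiv {g : X → ℝ} (hg : Measurable g)
      (hg_le : ∀ x, |g x| ≤ 1 + |log (p x)| + |log (q x)|) :=
    hasDerivAt_integral_tilt_mul hab hpmeas hp0 hqmeas hpos
      (hint a (habI (left_mem_Icc.2 (h0.1.trans h0.2))))
      (hint b (habI (right_mem_Icc.2 (h0.1.trans h0.2)))) hg hg_le
  have hZ' : HasDerivAt Z (∫ x, p x * log (q x) ∂μ) 0 := by
    simpa [hZ] using hderiv (g := fun _ => (1 : ℝ)) measurable_const fun x => by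
      rw [abs_one]; linarith [abs_nonneg (log (p x)), abs_nonneg (log (q x))]
  have hA' := hderiv hpmeas.log fun x => by linarith [abs_nonneg (log (q x))]
  have hB' := hderiv hqmeas.log fun x => by linarith [abs_nonneg (log (p x))]
  have hZ0 : Z 0 = 1 := by simpa [hZ] using hp1
  have hentropy : (fun α => -∫ x, p x * q x ^ α / Z α * log (p x * q x ^ α / Z α) ∂μ) =ᶠ[𝓝 0]
      fun α => log (Z α) - (∫ x, p x * q x ^ α * log (p x) ∂μ
        + α * ∫ x, p x * q x ^ α * log (q x) ∂μ) / Z α := by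
    filter_upwards [hIopen.mem_nhds hI0, hZ'.continuousAt.eventually (lt_mem_nhds
      (hZ0 ▸ one_pos))] with α hα hZα
    rw [integral_tilt_mul_log_tilt hpmeas hp0 hqmeas hq0 hpos (hint α hα) (by rw [hZ]) hZα]
    ring
  refine ((hasDerivAt_log_sub_add_mul_div hZ' hA' hB' hZ0).congr_of_eventuallyEq
    hentropy).congr_deriv ?_
  simp only [rpow_zero, mul_one]
  ring

/-- The entropy of the tilted density `p_α = p q^α / Z_α` is differentiable at `α = 0`, with
derivative `−Cov_p[log p, log q]`. -/
theorem skewed_entropy_deriv_at_zero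
    {X : Type*} [MeasurableSpace X] (μ : Measure X) [SigmaFinite μ]
    (p q : X → ℝ)
    (hpmeas : Measurable p) (hp0 : ∀ x, 0 ≤ p x) (hp1 : ∫ x, p x ∂μ = 1)
    (hqmeas : Measurable q) (hq0 : ∀ x, 0 ≤ q x) (hq1 : ∫ x, q x ∂μ = 1)
    (habs : ∀ᵐ x ∂μ, q x = 0 → p x = 0)
    (Z : ℝ → ℝ) (hZ : Z = fun α => ∫ x, p x * q x ^ α ∂μ)
    (pα : ℝ → X → ℝ) (hpα : pα = fun α x => p x * q x ^ α / Z α)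
    (I : Set ℝ) (hIopen : IsOpen I) (hI0 : (0 : ℝ) ∈ I)
    (hint : ∀ α ∈ I, Integrable
      (fun x => p x * q x ^ α * (1 + |Real.log (p x)| + |Real.log (q x)|) ^ 2) μ)
    (hZpos : ∀ α ∈ I, 0 < Z α)
    (H : (X → ℝ) → ℝ)
    (hH : H = fun r => -∫ x, r x * Real.log (r x) ∂μ) :
    HasDerivAt (fun α => H (pα α))
      (-((∫ x, p x * (Real.log (p x) * Real.log (q x)) ∂μ) -
        (∫ x, p x * Real.log (p x) ∂μ) * (∫ x, p x * Real.log (q x) ∂μ))) 0 :=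
  skewed_entropy_deriv_at_zero_general μ p q hpmeas hp0 hp1 hqmeas hq0 habs Z hZ pα hpα I hIopen hI0
    hint H hH
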